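/- arXiv:2001.08115 — 3 statements merged into one kernel-verified Lean document; each statement's English description precedes it below -/
import Mathlib

section
/- For all real c, d, x with d > 0 and x > 0: if c ≤ 0 then ∑_{r ∈ ℤ, r ≥ d} r^c e^{−rx} ≤ (1 + 1/x)·e^{−dx}, and if c > 0 then ∑_{r ∈ ℤ, r ≥ d} r^c e^{−rx} ≤ (1 + 2/x)·(c/x)^c·e^{−dx/2}. -/
/-!
Over the integers `r ≥ d` the weights `exp (-r x)` form a geometric tail with sum
`exp (-⌈d⌉ x) / (1 - exp (-x))`, and `exp x ≥ 1 + x` bounds `1 / (1 - exp (-x))` by `1 + 1 / x`.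
For `c ≤ 0` the factor `r ^ c` is at most `1`. For `c > 0` write `exp (-r x)` as
`exp (-r x / 2) ^ 2`: one factor absorbs `r ^ c`, since `t ^ c exp (-t x / 2)` is maximal at
`t = 2c / x` with value `(2c / x) ^ c exp (-c) ≤ (c / x) ^ c` (as `2 ≤ e`), and the other leaves
the geometric tail at rate `x / 2`.
-/

open Real

theorem tsum_ite_le_of_hasSum {ι : Type*} {P : ι → Prop} [DecidablePred P] {f g : ι → ℝ} {a : ℝ}
    (hf : ∀ i, P i → 0 ≤ f i) (hfg : ∀ i, P i → f i ≤ g i)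
    (hg : HasSum (fun i => if P i then g i else 0) a) :
    (∑' i, if P i then f i else 0) ≤ a := by
  have hle : ∀ i, (if P i then f i else 0) ≤ if P i then g i else 0 := fun i => by
    split_ifs with h
    exacts [hfg i h, le_rfl]
  have hnonneg : ∀ i, 0 ≤ if P i then f i else 0 := fun i => by
    split_ifs with h
    exacts [hf i h, le_rfl]
  exact hasSum_le hle (hg.summable.of_nonneg_of_le hnonneg hle).hasSum hg

theorem hasSum_ite_le_pow {q : ℝ} (hq₀ : 0 ≤ q) (hq₁ : q < 1) (m : ℕ) :
    HasSum (fun n : ℕ => if m ≤ n then q ^ n else 0) (q ^ m / (1 - q)) := by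
  rw [← hasSum_nat_add_iff' m, Finset.sum_eq_zero fun i hi => if_neg (by simpa using hi), sub_zero]
  simpa [pow_add, mul_comm, div_eq_mul_inv] using (hasSum_geometric_of_lt_one hq₀ hq₁).mul_left (q ^ m)

theorem ceil_le_iff_le_and_one_le {d : ℝ} (hd : 0 < d) {r : ℕ} : ⌈d⌉₊ ≤ r ↔ d ≤ r ∧ 1 ≤ r :=
  ⟨fun h => ⟨Nat.ceil_le.mp h, (Nat.one_le_ceil_iff.mpr hd).trans h⟩,
    fun h => Nat.ceil_le.mpr h.1⟩

theorem hasSum_exp_neg_mul_tail {d y : ℝ} (hd : 0 < d) (hy : 0 < y) :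
    HasSum (fun r : ℕ => if d ≤ (r : ℝ) ∧ 1 ≤ r then exp (-r * y) else 0)
      (exp (-y) ^ ⌈d⌉₊ / (1 - exp (-y))) := by
  simpa only [← ceil_le_iff_le_and_one_le hd, ← exp_nat_mul, neg_mul, mul_neg] using
    hasSum_ite_le_pow (exp_pos (-y)).le (exp_lt_one_iff.mpr (neg_lt_zero.mpr hy)) ⌈d⌉₊

theorem one_div_one_sub_exp_neg_le {y : ℝ} (hy : 0 < y) : 1 / (1 - exp (-y)) ≤ 1 + 1 / y := by
  have hq : exp (-y) * (1 + y) ≤ 1 := by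
    calc exp (-y) * (1 + y) ≤ exp (-y) * exp y := by gcongr; linarith [add_one_le_exp y]
      _ = 1 := by rw [← exp_add, neg_add_cancel, exp_zero]
  have h1q : 0 < 1 - exp (-y) := sub_pos.mpr (exp_lt_one_iff.mpr (neg_lt_zero.mpr hy))
  rw [div_le_iff₀ h1q]
  field_simp
  nlinarith

theorem exp_neg_pow_ceil_div_le (d : ℝ) {y : ℝ} (hy : 0 < y) :
    exp (-y) ^ ⌈d⌉₊ / (1 - exp (-y)) ≤ (1 + 1 / y) * exp (-d * y) := by
  have hpow : exp (-y) ^ ⌈d⌉₊ ≤ exp (-d * y) := by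
    rw [← exp_nat_mul, exp_le_exp]
    nlinarith [Nat.le_ceil d]
  rw [div_eq_mul_one_div, mul_comm]
  exact mul_le_mul (one_div_one_sub_exp_neg_le hy) hpow (by positivity) (by positivity)

theorem rpow_mul_exp_neg_le {c s t : ℝ} (hc : 0 < c) (hs : 0 < s) (ht : 0 ≤ t) :
    t ^ c * exp (-t * s) ≤ (c / s) ^ c * exp (-c) := by
  have hmax : t * s / c ≤ exp (t * s / c - 1) := by linarith [add_one_le_exp (t * s / c - 1)]
  have hpow : (t * s / c) ^ c ≤ exp (t * s - c) := by
    calc (t * s / c) ^ c ≤ exp (t * s / c - 1) ^ c := rpow_le_rpow (by positivity) hmax hc.le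
      _ = exp (t * s - c) := by rw [← exp_mul]; field_simp
  calc t ^ c * exp (-t * s) = (c / s) ^ c * (t * s / c) ^ c * exp (-t * s) := by
        rw [← mul_rpow (by positivity) (by positivity)]; field_simp
    _ ≤ (c / s) ^ c * exp (t * s - c) * exp (-t * s) := by gcongr
    _ = (c / s) ^ c * exp (-c) := by rw [mul_assoc, ← exp_add]; ring_nf

theorem two_rpow_mul_exp_neg_le_one {c : ℝ} (hc : 0 ≤ c) : (2 : ℝ) ^ c * exp (-c) ≤ 1 := by
  have h2 : (2 : ℝ) ^ c ≤ exp c := by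
    rw [← exp_one_rpow]
    exact rpow_le_rpow (by norm_num) (by linarith [add_one_le_exp 1]) hc
  calc (2 : ℝ) ^ c * exp (-c) ≤ exp c * exp (-c) := by gcongr
    _ = 1 := by rw [← exp_add, add_neg_cancel, exp_zero]

theorem rpow_mul_exp_neg_le_mul_exp_neg_half {c x t : ℝ} (hc : 0 < c) (hx : 0 < x) (ht : 0 ≤ t) :
    t ^ c * exp (-t * x) ≤ (c / x) ^ c * exp (-t * (x / 2)) := by
  have hx2 : 0 < x / 2 := half_pos hx
  have hsplit : exp (-t * x) = exp (-t * (x / 2)) * exp (-t * (x / 2)) := by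
    rw [← exp_add]; ring_nf
  calc t ^ c * exp (-t * x) = t ^ c * exp (-t * (x / 2)) * exp (-t * (x / 2)) := by
        rw [hsplit, mul_assoc]
    _ ≤ (c / (x / 2)) ^ c * exp (-c) * exp (-t * (x / 2)) :=
        mul_le_mul_of_nonneg_right (rpow_mul_exp_neg_le hc hx2 ht) (exp_pos _).le
    _ = (c / x) ^ c * (2 ^ c * exp (-c)) * exp (-t * (x / 2)) := by
        rw [div_div_eq_mul_div, mul_div_right_comm, mul_rpow (by positivity) (by norm_num)]; ring
    _ ≤ (c / x) ^ c * exp (-t * (x / 2)) :=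
        mul_le_mul_of_nonneg_right
          (mul_le_of_le_one_right (by positivity) (two_rpow_mul_exp_neg_le_one hc.le)) (exp_pos _).le

theorem stmt7 (c d x : ℝ) (hd : 0 < d) (hx : 0 < x) :
    (c ≤ 0 →
      (∑' r : ℕ, if d ≤ (r : ℝ) ∧ 1 ≤ r then (r : ℝ) ^ c * Real.exp (-(r : ℝ) * x) else 0)
        ≤ (1 + 1 / x) * Real.exp (-d * x)) ∧
    (0 < c →
      (∑' r : ℕ, if d ≤ (r : ℝ) ∧ 1 ≤ r then (r : ℝ) ^ c * Real.exp (-(r : ℝ) * x) else 0)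
        ≤ (1 + 2 / x) * (c / x) ^ c * Real.exp (-d * x / 2)) := by
  refine ⟨fun hc => ?_, fun hc => ?_⟩
  · refine (tsum_ite_le_of_hasSum (fun r _ => by positivity) (fun r hr => ?_)
      (hasSum_exp_neg_mul_tail hd hx)).trans (exp_neg_pow_ceil_div_le d hx)
    exact mul_le_of_le_one_left (exp_pos _).le
      (rpow_le_one_of_one_le_of_nonpos (by exact_mod_cast hr.2) hc)
  · have hx2 : 0 < x / 2 := half_pos hx
    have hsum := (hasSum_exp_neg_mul_tail hd hx2).mul_left ((c / x) ^ c)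
    simp only [mul_ite, mul_zero] at hsum
    calc _ ≤ (c / x) ^ c * (exp (-(x / 2)) ^ ⌈d⌉₊ / (1 - exp (-(x / 2)))) :=
          tsum_ite_le_of_hasSum (fun r _ => by positivity)
            (fun r _ => rpow_mul_exp_neg_le_mul_exp_neg_half hc hx r.cast_nonneg) hsum
      _ ≤ (c / x) ^ c * ((1 + 1 / (x / 2)) * exp (-d * (x / 2))) := by
          gcongr; exact exp_neg_pow_ceil_div_le d hx2
      _ = (1 + 2 / x) * (c / x) ^ c * Real.exp (-d * x / 2) := by
          rw [one_div_div, mul_div_assoc']; ring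
end

section
/- For every L ∈ ℤ_{≥1}, δ > 0 and C₀ > 0 there is a constant K > 0, depending only on δ, C₀ and L, such that for all N ∈ ℤ_{≥1} and all z ∈ ℂ with Re z ≤ −δ and |z| ≤ C₀, the series χ(−z,N) := ∑_{r=1}^∞ e^{rz}/( r·(e^{−rz/N} − 1) ) converges and satisfies |−χ(−z,N) − ( (N/z)·Li₂(e^z) − (1/2)·log(1 − e^z) + ∑_{ℓ=2}^{L} (B_ℓ/ℓ!)·(z/N)^{ℓ−1}·Li_{2−ℓ}(e^z) )| ≤ K·N^{−L}. -/
open scoped Real BigOperators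

/-- The polylogarithm of integer order `s`, defined by its series (valid for `|w| < 1`). -/
noncomputable def Li (s : ℤ) (w : ℂ) : ℂ := ∑' n : ℕ, w ^ (n + 1) / ((n : ℂ) + 1) ^ s

open Finset

noncomputable abbrev Complex.abs : AbsoluteValue ℂ ℝ := IsAbsoluteValue.toAbsoluteValue (norm : ℂ → ℝ)

theorem Complex.norm_eq_abs (z : ℂ) : ‖z‖ = Complex.abs z := rfl

theorem Complex.abs_ofReal (x : ℝ) : Complex.abs (x : ℂ) = |x| := Complex.norm_real x

theorem Complex.abs_exp (z : ℂ) : Complex.abs (Complex.exp z) = Real.exp z.re := Complex.norm_exp z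

theorem Complex.abs_exp_sub_one_sub_id_le {x : ℂ} (hx : Complex.abs x ≤ 1) :
    Complex.abs (Complex.exp x - 1 - x) ≤ Complex.abs x ^ 2 := Complex.norm_exp_sub_one_sub_id_le hx

noncomputable def QQ (ℓ : ℕ) : ℂ := ((bernoulli ℓ : ℚ) : ℂ) / (Nat.factorial ℓ : ℂ)

noncomputable def PP (L : ℕ) (w : ℂ) : ℂ := ∑ ℓ ∈ range (L + 1), QQ ℓ * w ^ ℓ

lemma tri (f : ℕ → ℕ → ℂ) (n : ℕ) :
    (∑ ℓ ∈ range n, ∑ j ∈ range (n - ℓ), f ℓ j)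
      = ∑ m ∈ range n, ∑ ℓ ∈ range (m + 1), f ℓ (m - ℓ) := by
  induction n with
  | zero => simp
  | succ n ih =>
    rw [sum_range_succ (f := fun m => ∑ ℓ ∈ range (m+1), f ℓ (m - ℓ)), ← ih,
      sum_range_succ]
    have h1 : ∀ ℓ ∈ range n, ∑ j ∈ range (n + 1 - ℓ), f ℓ j
        = (∑ j ∈ range (n - ℓ), f ℓ j) + f ℓ (n - ℓ) := by
      intro ℓ hℓ
      have hℓ' : ℓ < n := mem_range.mp hℓ
      have : n + 1 - ℓ = (n - ℓ) + 1 := by omega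
      rw [this, sum_range_succ]
    rw [sum_congr rfl h1, sum_add_distrib]
    have h2 : n + 1 - n = 1 := by omega
    rw [h2, sum_range_one, sum_range_succ (f := fun ℓ => f ℓ (n - ℓ))]
    simp [Nat.sub_self]
    ring

lemma bern_id (L : ℕ) (hL : 1 ≤ L) (w : ℂ) :
    ∑ ℓ ∈ range (L + 1), QQ ℓ * w ^ ℓ * (∑ j ∈ range (L + 2 - ℓ), w ^ j / (Nat.factorial j : ℂ))
      = (∑ ℓ ∈ range (L + 1), QQ ℓ * w ^ ℓ) + w := by
  set f : ℕ → ℕ → ℂ := fun ℓ j =>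
    if ℓ ≤ L then QQ ℓ * w ^ ℓ * (w ^ j / (Nat.factorial j : ℂ)) else 0 with hf
  have hext : ∑ ℓ ∈ range (L + 2), ∑ j ∈ range (L + 2 - ℓ), f ℓ j
      = ∑ ℓ ∈ range (L + 1), QQ ℓ * w ^ ℓ *
        (∑ j ∈ range (L + 2 - ℓ), w ^ j / (Nat.factorial j : ℂ)) := by
    rw [sum_range_succ]
    have hlast : ∑ j ∈ range (L + 2 - (L + 1)), f (L + 1) j = 0 := by
      simp [hf]
    rw [hlast, add_zero]
    refine sum_congr rfl fun ℓ hℓ => ?_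
    have : ℓ ≤ L := by simpa [Nat.lt_succ_iff] using mem_range.mp hℓ
    simp [hf, this, mul_sum]
  rw [← hext, tri]
  have key : ∀ m ∈ range (L + 2), (∑ ℓ ∈ range (m + 1), f ℓ (m - ℓ))
      = (if m ≤ L then QQ m * w ^ m else 0) + (if m = 1 then w else 0) := by
    intro m hm
    have hm' : m ≤ L + 1 := by simpa [Nat.lt_succ_iff] using mem_range.mp hm
    have hstep : ∀ ℓ ∈ range (m + 1), f ℓ (m - ℓ)
        = (if ℓ ≤ L then (((m.choose ℓ : ℚ) * bernoulli ℓ : ℚ) : ℂ) / (Nat.factorial m : ℂ)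
            else 0) * w ^ m := by
      intro ℓ hℓ
      have hℓm : ℓ ≤ m := by simpa [Nat.lt_succ_iff] using mem_range.mp hℓ
      by_cases h : ℓ ≤ L
      · simp only [hf, h, if_true, QQ]
        have hpow : w ^ ℓ * w ^ (m - ℓ) = w ^ m := by
          rw [← pow_add]; congr 1; omega
        have hfac : ((m.choose ℓ : ℂ) * (Nat.factorial ℓ : ℂ)) * (Nat.factorial (m - ℓ) : ℂ)
            = (Nat.factorial m : ℂ) := by
          exact_mod_cast congrArg (Nat.cast : ℕ → ℂ)
            (Nat.choose_mul_factorial_mul_factorial hℓm)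
        have h1 : (Nat.factorial ℓ : ℂ) ≠ 0 := Nat.cast_ne_zero.2 (Nat.factorial_ne_zero ℓ)
        have h2 : (Nat.factorial (m - ℓ) : ℂ) ≠ 0 := Nat.cast_ne_zero.2 (Nat.factorial_ne_zero _)
        have h3 : (Nat.factorial m : ℂ) ≠ 0 := Nat.cast_ne_zero.2 (Nat.factorial_ne_zero m)
        field_simp
        push_cast
        rw [← hpow]
        ring_nf
        linear_combination (((bernoulli ℓ : ℚ) : ℂ)) * w ^ ℓ * w ^ (m - ℓ) * hfac.symm
      · simp [hf, h]
    rw [sum_congr rfl hstep, ← sum_mul]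
    by_cases hmL : m ≤ L
    · have hall : ∀ ℓ ∈ range (m + 1),
          (if ℓ ≤ L then (((m.choose ℓ : ℚ) * bernoulli ℓ : ℚ) : ℂ) / (Nat.factorial m : ℂ)
            else 0)
          = (((m.choose ℓ : ℚ) * bernoulli ℓ : ℚ) : ℂ) / (Nat.factorial m : ℂ) := by
        intro ℓ hℓ
        have : ℓ ≤ L := le_trans (by simpa [Nat.lt_succ_iff] using mem_range.mp hℓ) hmL
        simp [this]
      rw [sum_congr rfl hall, ← sum_div]
      have hsum : ∑ ℓ ∈ range (m + 1), (((m.choose ℓ : ℚ) * bernoulli ℓ : ℚ) : ℂ)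
          = (((if m = 1 then (1:ℚ) else 0) + bernoulli m : ℚ) : ℂ) := by
        rw [← Complex.ofReal_ratCast]
        push_cast [← Rat.cast_sum]
        norm_cast
        rw [sum_range_succ, sum_bernoulli]
        simp
      rw [hsum]
      by_cases hm1 : m = 1
      · subst hm1
        simp [QQ, hmL]
        ring
      · simp [hm1, hmL, QQ]
    · -- m = L + 1
      have hmeq : m = L + 1 := by omega
      have hsplit : ∑ ℓ ∈ range (m + 1),
          (if ℓ ≤ L then (((m.choose ℓ : ℚ) * bernoulli ℓ : ℚ) : ℂ) / (Nat.factorial m : ℂ)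
            else 0)
          = ∑ ℓ ∈ range m, (((m.choose ℓ : ℚ) * bernoulli ℓ : ℚ) : ℂ) / (Nat.factorial m : ℂ) := by
        rw [sum_range_succ]
        have : ¬ (m ≤ L) := hmL
        rw [if_neg this, add_zero]
        refine sum_congr rfl fun ℓ hℓ => ?_
        have : ℓ ≤ L := by
          have := mem_range.mp hℓ; omega
        simp [this]
      rw [hsplit, ← sum_div]
      have hsum : ∑ ℓ ∈ range m, (((m.choose ℓ : ℚ) * bernoulli ℓ : ℚ) : ℂ) = 0 := by
        push_cast [← Rat.cast_sum]
        norm_cast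
        rw [sum_bernoulli]
        have : m ≠ 1 := by omega
        simp [this]
      rw [hsum]
      have : m ≠ 1 := by omega
      simp [hmL, this]
  rw [sum_congr rfl key, sum_add_distrib]
  congr 1
  · rw [sum_range_succ]
    have : ¬ (L + 1 ≤ L) := by omega
    rw [if_neg this, add_zero]
    refine sum_congr rfl fun ℓ hℓ => ?_
    have : ℓ ≤ L := by simpa [Nat.lt_succ_iff] using mem_range.mp hℓ
    simp [this]
  · rw [Finset.sum_ite_eq' (range (L + 2)) 1 (fun _ => w)]
    simp [Nat.lt_succ_iff]

lemma D_eq (L : ℕ) (hL : 1 ≤ L) (w : ℂ) :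
    w - PP L w * (Complex.exp w - 1)
      = -∑ ℓ ∈ range (L + 1), QQ ℓ * w ^ ℓ *
          (Complex.exp w - ∑ j ∈ range (L + 2 - ℓ), w ^ j / (Nat.factorial j : ℂ)) := by
  have h := bern_id L hL w
  have expand : ∀ ℓ ∈ range (L + 1), QQ ℓ * w ^ ℓ * (Complex.exp w - 1)
      = QQ ℓ * w ^ ℓ *
          (Complex.exp w - ∑ j ∈ range (L + 2 - ℓ), w ^ j / (Nat.factorial j : ℂ))
        + QQ ℓ * w ^ ℓ * (∑ j ∈ range (L + 2 - ℓ), w ^ j / (Nat.factorial j : ℂ))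
        - QQ ℓ * w ^ ℓ := by
    intro ℓ _; ring
  have : PP L w * (Complex.exp w - 1)
      = (∑ ℓ ∈ range (L + 1), QQ ℓ * w ^ ℓ *
          (Complex.exp w - ∑ j ∈ range (L + 2 - ℓ), w ^ j / (Nat.factorial j : ℂ)))
        + (∑ ℓ ∈ range (L + 1), QQ ℓ * w ^ ℓ *
            (∑ j ∈ range (L + 2 - ℓ), w ^ j / (Nat.factorial j : ℂ)))
        - PP L w := by
    rw [PP, sum_mul, sum_congr rfl expand]
    rw [sum_sub_distrib, sum_add_distrib]
  rw [this, h]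
  rw [PP]
  ring

lemma abs_QQ (ℓ : ℕ) : Complex.abs (QQ ℓ) = |((bernoulli ℓ : ℚ) : ℝ)| / (Nat.factorial ℓ : ℝ) := by
  rw [QQ, map_div₀]
  congr 1
  · rw [show ((bernoulli ℓ : ℚ) : ℂ) = (((bernoulli ℓ : ℚ) : ℝ) : ℂ) by push_cast; ring,
      Complex.abs_ofReal]
  · rw [show ((Nat.factorial ℓ : ℕ) : ℂ) = (((Nat.factorial ℓ : ℕ) : ℝ) : ℂ) by push_cast; ring,
      Complex.abs_ofReal, abs_of_nonneg (by positivity)]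

lemma lemA (L : ℕ) (hL : 1 ≤ L) (ε : ℝ) (hε : 0 < ε) :
    ∃ C > 0, ∀ w : ℂ, w ≠ 0 → ε * Complex.abs w ≤ w.re →
      Complex.abs (1 / (Complex.exp w - 1) - PP L w / w) ≤ C * Complex.abs w ^ L := by
  set A : ℝ := ∑ ℓ ∈ range (L + 1), |((bernoulli ℓ : ℚ) : ℝ)| / (Nat.factorial ℓ : ℝ) *
      (((L + 2 - ℓ : ℕ).succ : ℝ) * (((L + 2 - ℓ : ℕ).factorial : ℝ) * ((L + 2 - ℓ : ℕ) : ℝ))⁻¹)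
    with hA
  set B : ℝ := ∑ ℓ ∈ range (L + 1), |((bernoulli ℓ : ℚ) : ℝ)| / (Nat.factorial ℓ : ℝ) with hB
  have hA0 : 0 ≤ A := by
    apply sum_nonneg; intro ℓ _; positivity
  have hB0 : 0 ≤ B := by
    apply sum_nonneg; intro ℓ _; positivity
  have hexpε : 0 < Real.exp (ε / 2) - 1 := by
    have : (1 : ℝ) < Real.exp (ε / 2) := by
      rw [show (1:ℝ) = Real.exp 0 by simp]
      exact Real.exp_lt_exp.2 (by linarith)
    linarith
  refine ⟨2 * A + ((Real.exp (ε / 2) - 1)⁻¹ * 2 ^ L + B * 2 ^ (L + 1)) + 1, by positivity,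
    fun w hw hsec => ?_⟩
  set C : ℝ := 2 * A + ((Real.exp (ε / 2) - 1)⁻¹ * 2 ^ L + B * 2 ^ (L + 1)) + 1 with hC
  have habs0 : 0 < Complex.abs w := AbsoluteValue.pos _ hw
  have hre : 0 < w.re := lt_of_lt_of_le (by positivity) hsec
  have hexp1 : Complex.exp w ≠ 1 := by
    intro h
    have := congrArg Complex.abs h
    rw [Complex.abs_exp] at this
    simp at this
    linarith
  have hden : Complex.exp w - 1 ≠ 0 := sub_ne_zero.2 hexp1
  have keyrw : 1 / (Complex.exp w - 1) - PP L w / w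
      = (w - PP L w * (Complex.exp w - 1)) / (w * (Complex.exp w - 1)) := by
    field_simp
  rw [keyrw, map_div₀, map_mul]
  rcases le_or_gt (Complex.abs w) (1 / 2) with hsmall | hbig
  · -- small case
    have hnum : Complex.abs (w - PP L w * (Complex.exp w - 1))
        ≤ A * Complex.abs w ^ (L + 2) := by
      rw [D_eq L hL w, map_neg_eq_map]
      calc Complex.abs (∑ ℓ ∈ range (L + 1), QQ ℓ * w ^ ℓ *
            (Complex.exp w - ∑ j ∈ range (L + 2 - ℓ), w ^ j / (Nat.factorial j : ℂ)))
          ≤ ∑ ℓ ∈ range (L + 1), Complex.abs (QQ ℓ * w ^ ℓ *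
            (Complex.exp w - ∑ j ∈ range (L + 2 - ℓ), w ^ j / (Nat.factorial j : ℂ))) := by
            exact AbsoluteValue.sum_le _ _ _
        _ ≤ A * Complex.abs w ^ (L + 2) := by
            rw [hA, sum_mul]
            apply sum_le_sum
            intro ℓ hℓ
            have hℓL : ℓ ≤ L := by simpa [Nat.lt_succ_iff] using mem_range.mp hℓ
            rw [map_mul, map_mul, abs_QQ, map_pow]
            have hbnd := Complex.exp_bound (x := w) (by rw [Complex.norm_eq_abs]; linarith) (n := L + 2 - ℓ) (by omega)
            have hsplit : Complex.abs w ^ (L + 2) = Complex.abs w ^ ℓ * Complex.abs w ^ (L + 2 - ℓ) := by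
              rw [← pow_add]; congr 1; omega
            calc |((bernoulli ℓ : ℚ) : ℝ)| / (Nat.factorial ℓ : ℝ) * Complex.abs w ^ ℓ *
                Complex.abs (Complex.exp w - ∑ j ∈ range (L + 2 - ℓ), w ^ j / (Nat.factorial j : ℂ))
                ≤ |((bernoulli ℓ : ℚ) : ℝ)| / (Nat.factorial ℓ : ℝ) * Complex.abs w ^ ℓ *
                  (Complex.abs w ^ (L + 2 - ℓ) *
                    (((L + 2 - ℓ : ℕ).succ : ℝ) * (((L + 2 - ℓ : ℕ).factorial : ℝ) * ((L + 2 - ℓ : ℕ) : ℝ))⁻¹)) := by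
                  apply mul_le_mul_of_nonneg_left hbnd (by positivity)
              _ = |((bernoulli ℓ : ℚ) : ℝ)| / (Nat.factorial ℓ : ℝ) *
                  (((L + 2 - ℓ : ℕ).succ : ℝ) * (((L + 2 - ℓ : ℕ).factorial : ℝ) * ((L + 2 - ℓ : ℕ) : ℝ))⁻¹) *
                  Complex.abs w ^ (L + 2) := by
                  rw [hsplit]; ring
    have hlow : Complex.abs w / 2 ≤ Complex.abs (Complex.exp w - 1) := by
      have h1 : Complex.abs (Complex.exp w - 1 - w) ≤ Complex.abs w ^ 2 :=
        Complex.abs_exp_sub_one_sub_id_le (by linarith)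
      have h2 : Complex.abs w ≤ Complex.abs (Complex.exp w - 1) + Complex.abs (Complex.exp w - 1 - w) := by
        calc Complex.abs w = Complex.abs ((Complex.exp w - 1) - (Complex.exp w - 1 - w)) := by
              congr 1; ring
          _ ≤ _ := AbsoluteValue.sub_le_add _ _ _
      nlinarith [sq_nonneg (Complex.abs w)]
    have hden2 : (0:ℝ) < Complex.abs w * (Complex.abs w / 2) := by positivity
    calc Complex.abs (w - PP L w * (Complex.exp w - 1)) /
          (Complex.abs w * Complex.abs (Complex.exp w - 1))
        ≤ (A * Complex.abs w ^ (L + 2)) / (Complex.abs w * (Complex.abs w / 2)) := by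
          apply div_le_div₀ (by positivity) hnum hden2
          exact mul_le_mul_of_nonneg_left hlow (le_of_lt habs0)
      _ = 2 * A * Complex.abs w ^ L := by
          rw [show L + 2 = L + 1 + 1 by ring, pow_succ, pow_succ]
          field_simp
      _ ≤ C * Complex.abs w ^ L := by
          apply mul_le_mul_of_nonneg_right _ (by positivity)
          have h0 : 0 ≤ (Real.exp (ε / 2) - 1)⁻¹ * 2 ^ L + B * 2 ^ (L + 1) := by positivity
          rw [hC]; linarith
  · -- big case
    have hre2 : ε / 2 ≤ w.re := le_trans (by nlinarith) hsec
    have hlow : Real.exp (ε / 2) - 1 ≤ Complex.abs (Complex.exp w - 1) := by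
      have h1 : Real.exp (ε / 2) ≤ Complex.abs (Complex.exp w) := by
        rw [Complex.abs_exp]; exact Real.exp_le_exp.2 hre2
      have h2 : Complex.abs (Complex.exp w) - Complex.abs (1 : ℂ)
          ≤ Complex.abs (Complex.exp w - 1) := by
        exact
          norm_sub_norm_le (Complex.exp w) (1 : ℂ)
      simp only [map_one] at h2
      linarith
    have hwpos : (0:ℝ) ≤ Complex.abs w ^ L := by positivity
    have honele : (1:ℝ) ≤ 2 ^ L * Complex.abs w ^ L := by
      have : (1:ℝ) ≤ (2 * Complex.abs w) ^ L := by
        calc (1:ℝ) = 1 ^ L := (one_pow L).symm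
          _ ≤ (2 * Complex.abs w) ^ L := by
              apply pow_le_pow_left₀ (by norm_num) (by linarith)
      rwa [mul_pow] at this
    have h1 : Complex.abs ((w - PP L w * (Complex.exp w - 1)) / (w * (Complex.exp w - 1)))
        ≤ ((Real.exp (ε / 2) - 1)⁻¹ * 2 ^ L + B * 2 ^ (L + 1)) * Complex.abs w ^ L := by
      rw [← keyrw]
      have ht : Complex.abs (1 / (Complex.exp w - 1) - PP L w / w)
          ≤ Complex.abs (1 / (Complex.exp w - 1)) + Complex.abs (PP L w / w) := by
        exact
          norm_sub_le (1 / (Complex.exp w - 1)) (PP L w / w)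
      have hfirst : Complex.abs (1 / (Complex.exp w - 1))
          ≤ (Real.exp (ε / 2) - 1)⁻¹ * 2 ^ L * Complex.abs w ^ L := by
        rw [map_div₀, map_one]
        calc 1 / Complex.abs (Complex.exp w - 1) ≤ 1 / (Real.exp (ε / 2) - 1) := by
              apply one_div_le_one_div_of_le hexpε hlow
          _ = (Real.exp (ε / 2) - 1)⁻¹ * 1 := by rw [one_div, mul_one]
          _ ≤ (Real.exp (ε / 2) - 1)⁻¹ * (2 ^ L * Complex.abs w ^ L) := by
              apply mul_le_mul_of_nonneg_left honele (by positivity)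
          _ = (Real.exp (ε / 2) - 1)⁻¹ * 2 ^ L * Complex.abs w ^ L := by ring
      have hpowsum : ∀ ℓ ∈ range (L + 1),
          Complex.abs (QQ ℓ * w ^ ℓ) / Complex.abs w
            ≤ |((bernoulli ℓ : ℚ) : ℝ)| / (Nat.factorial ℓ : ℝ) *
              (2 ^ (L + 1) * Complex.abs w ^ L) := by
        intro ℓ hℓ
        have hℓL : ℓ ≤ L := by simpa [Nat.lt_succ_iff] using mem_range.mp hℓ
        rw [map_mul, abs_QQ, map_pow]
        have hkey : Complex.abs w ^ ℓ ≤ 2 ^ (L + 1) * Complex.abs w ^ (L + 1) := by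
          have e1 : ((1:ℝ)/2) ^ (L + 1) ≤ ((1:ℝ)/2) ^ (L + 1 - ℓ) := by
            apply pow_le_pow_of_le_one (by norm_num) (by norm_num)
            omega
          have e2 : ((1:ℝ)/2) ^ (L + 1 - ℓ) ≤ Complex.abs w ^ (L + 1 - ℓ) := by
            apply pow_le_pow_left₀ (by norm_num)
            linarith
          have e3 : Complex.abs w ^ ℓ * Complex.abs w ^ (L + 1 - ℓ) = Complex.abs w ^ (L + 1) := by
            rw [← pow_add]; congr 1; omega
          have e4 : Complex.abs w ^ ℓ * ((1:ℝ)/2) ^ (L + 1) ≤ Complex.abs w ^ (L + 1) := by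
            calc Complex.abs w ^ ℓ * ((1:ℝ)/2) ^ (L + 1)
                ≤ Complex.abs w ^ ℓ * Complex.abs w ^ (L + 1 - ℓ) := by
                  apply mul_le_mul_of_nonneg_left (le_trans e1 e2) (by positivity)
              _ = Complex.abs w ^ (L + 1) := e3
          have e5 : ((1:ℝ)/2) ^ (L + 1) > 0 := by positivity
          calc Complex.abs w ^ ℓ
              = (Complex.abs w ^ ℓ * ((1:ℝ)/2) ^ (L + 1)) * 2 ^ (L + 1) := by
                rw [mul_assoc, ← mul_pow]
                norm_num
            _ ≤ Complex.abs w ^ (L + 1) * 2 ^ (L + 1) := by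
                apply mul_le_mul_of_nonneg_right e4 (by positivity)
            _ = 2 ^ (L + 1) * Complex.abs w ^ (L + 1) := by ring
        rw [div_le_iff₀ habs0]
        calc |((bernoulli ℓ : ℚ) : ℝ)| / (Nat.factorial ℓ : ℝ) * Complex.abs w ^ ℓ
            ≤ |((bernoulli ℓ : ℚ) : ℝ)| / (Nat.factorial ℓ : ℝ) *
              (2 ^ (L + 1) * Complex.abs w ^ (L + 1)) := by
              apply mul_le_mul_of_nonneg_left hkey (by positivity)
          _ = |((bernoulli ℓ : ℚ) : ℝ)| / (Nat.factorial ℓ : ℝ) *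
              (2 ^ (L + 1) * Complex.abs w ^ L) * Complex.abs w := by
              rw [pow_succ]; ring
      have hsecond : Complex.abs (PP L w / w) ≤ B * 2 ^ (L + 1) * Complex.abs w ^ L := by
        rw [map_div₀, PP]
        calc Complex.abs (∑ ℓ ∈ range (L + 1), QQ ℓ * w ^ ℓ) / Complex.abs w
            ≤ (∑ ℓ ∈ range (L + 1), Complex.abs (QQ ℓ * w ^ ℓ)) / Complex.abs w := by
              gcongr
              exact AbsoluteValue.sum_le _ _ _
          _ = ∑ ℓ ∈ range (L + 1), Complex.abs (QQ ℓ * w ^ ℓ) / Complex.abs w := by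
              rw [sum_div]
          _ ≤ ∑ ℓ ∈ range (L + 1), |((bernoulli ℓ : ℚ) : ℝ)| / (Nat.factorial ℓ : ℝ) *
              (2 ^ (L + 1) * Complex.abs w ^ L) := sum_le_sum hpowsum
          _ = B * 2 ^ (L + 1) * Complex.abs w ^ L := by
              rw [hB, sum_mul, sum_mul]
              refine sum_congr rfl fun ℓ _ => ?_
              ring
      calc Complex.abs (1 / (Complex.exp w - 1) - PP L w / w)
          ≤ Complex.abs (1 / (Complex.exp w - 1)) + Complex.abs (PP L w / w) := ht
        _ ≤ (Real.exp (ε / 2) - 1)⁻¹ * 2 ^ L * Complex.abs w ^ L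
            + B * 2 ^ (L + 1) * Complex.abs w ^ L := add_le_add hfirst hsecond
        _ = ((Real.exp (ε / 2) - 1)⁻¹ * 2 ^ L + B * 2 ^ (L + 1)) * Complex.abs w ^ L := by ring
    calc Complex.abs (w - PP L w * (Complex.exp w - 1)) /
          (Complex.abs w * Complex.abs (Complex.exp w - 1))
        = Complex.abs ((w - PP L w * (Complex.exp w - 1)) / (w * (Complex.exp w - 1))) := by
          rw [map_div₀, map_mul]
      _ ≤ ((Real.exp (ε / 2) - 1)⁻¹ * 2 ^ L + B * 2 ^ (L + 1)) * Complex.abs w ^ L := h1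
      _ ≤ C * Complex.abs w ^ L := by
          apply mul_le_mul_of_nonneg_right _ hwpos
          rw [hC]; linarith

lemma exp_ne_one_of_pos_re {w : ℂ} (h : 0 < w.re) : Complex.exp w ≠ 1 := by
  intro he
  have := congrArg Complex.abs he
  rw [Complex.abs_exp] at this
  simp at this
  linarith

lemma Li_one_eq {q : ℂ} (hq : Complex.abs q < 1) : Li 1 q = -Complex.log (1 - q) := by
  have h := Complex.hasSum_taylorSeries_neg_log (z := q)
    (by rwa [Complex.norm_eq_abs])
  have h' : HasSum (fun n : ℕ => q ^ n / (n : ℂ))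
      (-Complex.log (1 - q) + ∑ i ∈ range 1, q ^ i / (i : ℂ)) := by
    rw [show (∑ i ∈ range 1, q ^ i / (i : ℂ)) = 0 by simp, add_zero]
    exact h
  have h2 := (hasSum_nat_add_iff (f := fun n : ℕ => q ^ n / (n : ℂ)) 1).2 h'
  rw [Li, ← h2.tsum_eq]
  refine tsum_congr fun n => ?_
  push_cast
  rw [zpow_one]

lemma QQ_zero : QQ 0 = 1 := by unfold QQ; simp

lemma QQ_one : QQ 1 = -(1/2 : ℂ) := by
  unfold QQ
  rw [bernoulli_one]
  norm_num

lemma sum_split (L : ℕ) (hL : 1 ≤ L) (z Nc q : ℂ) (hz0 : z ≠ 0) (hN0 : Nc ≠ 0)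
    (hq1 : Complex.abs q < 1) :
    ∑ ℓ ∈ range (L + 1), QQ ℓ * (-1) ^ ℓ * (z / Nc) ^ ℓ * (Nc / z) * Li (2 - (ℓ : ℤ)) q
      = (Nc / z) * Li 2 q - (1 / 2) * Complex.log (1 - q)
        + ∑ ℓ ∈ Icc 2 L, QQ ℓ * (z / Nc) ^ (ℓ - 1) * Li (2 - (ℓ : ℤ)) q := by
  have hc : (z / Nc) * (Nc / z) = 1 := by
    rw [div_mul_div_comm, mul_comm z Nc, div_self (mul_ne_zero hN0 hz0)]
  rw [range_eq_Ico, ← Finset.sum_Ico_consecutive _ (by omega : 0 ≤ 2) (by omega : 2 ≤ L + 1)]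
  have h2 : ∑ ℓ ∈ Ico 0 2, QQ ℓ * (-1) ^ ℓ * (z / Nc) ^ ℓ * (Nc / z) * Li (2 - (ℓ : ℤ)) q
      = (Nc / z) * Li 2 q - (1 / 2) * Complex.log (1 - q) := by
    rw [show Ico 0 2 = range 2 from by rw [range_eq_Ico], sum_range_succ, sum_range_one]
    rw [QQ_zero, QQ_one]
    rw [show ((2 : ℤ) - ((0 : ℕ) : ℤ)) = 2 by norm_num,
      show ((2 : ℤ) - ((1 : ℕ) : ℤ)) = 1 by norm_num]
    rw [Li_one_eq hq1]
    rw [show (1 : ℂ) * (-1) ^ 0 * (z / Nc) ^ 0 * (Nc / z) = Nc / z by ring]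
    rw [show (-(1/2 : ℂ)) * (-1) ^ 1 * (z / Nc) ^ 1 * (Nc / z)
        = (1 / 2) * ((z / Nc) * (Nc / z)) by ring, hc]
    ring
  have h3 : Ico 2 (L + 1) = Icc 2 L := Finset.Ico_add_one_right_eq_Icc 2 L
  rw [h2, h3]
  congr 1
  refine sum_congr rfl fun ℓ hℓ => ?_
  obtain ⟨h2ℓ, hℓL⟩ := mem_Icc.mp hℓ
  have hcoef : QQ ℓ * (-1) ^ ℓ * (z / Nc) ^ ℓ * (Nc / z) = QQ ℓ * (z / Nc) ^ (ℓ - 1) := by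
    rcases Nat.even_or_odd ℓ with he | ho
    · rw [he.neg_one_pow]
      rw [show (z / Nc) ^ ℓ = (z / Nc) ^ (ℓ - 1) * (z / Nc) from by
        rw [← pow_succ]; congr 1; omega]
      calc QQ ℓ * 1 * ((z / Nc) ^ (ℓ - 1) * (z / Nc)) * (Nc / z)
          = QQ ℓ * (z / Nc) ^ (ℓ - 1) * ((z / Nc) * (Nc / z)) := by ring
        _ = QQ ℓ * (z / Nc) ^ (ℓ - 1) := by rw [hc, mul_one]
    · have hb : bernoulli ℓ = 0 := by
        rw [bernoulli_eq_bernoulli'_of_ne_one (by omega)]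
        exact bernoulli'_eq_zero_of_odd ho (by omega)
      have hQ0 : QQ ℓ = 0 := by unfold QQ; rw [hb]; simp
      rw [hQ0]
      ring
  rw [hcoef]

set_option maxHeartbeats 1000000 in
theorem stmt8 (L : ℕ) (hL : 1 ≤ L) (δ C₀ : ℝ) (hδ : 0 < δ) (hC : 0 < C₀) :
    ∃ K > (0 : ℝ), ∀ N : ℕ, 1 ≤ N → ∀ z : ℂ, z.re ≤ -δ → ‖z‖ ≤ C₀ →
      Summable (fun r : ℕ =>
        Complex.exp (((r : ℂ) + 1) * z) /
          (((r : ℂ) + 1) * (Complex.exp (-((r : ℂ) + 1) * z / (N : ℂ)) - 1))) ∧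
      ‖
        (-(∑' r : ℕ,
            Complex.exp (((r : ℂ) + 1) * z) /
              (((r : ℂ) + 1) * (Complex.exp (-((r : ℂ) + 1) * z / (N : ℂ)) - 1))) -
          (((N : ℂ) / z) * Li 2 (Complex.exp z) -
            (1 / 2) * Complex.log (1 - Complex.exp z) +
            ∑ ℓ ∈ Finset.Icc 2 L,
              ((bernoulli ℓ : ℚ) : ℂ) / (Nat.factorial ℓ : ℂ) *
                (z / (N : ℂ)) ^ (ℓ - 1) * Li (2 - (ℓ : ℤ)) (Complex.exp z)))‖
        ≤ K / (N : ℝ) ^ L := by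
  have hε : 0 < δ / C₀ := by positivity
  set ε := δ / C₀ with hεdef
  obtain ⟨C, hC0, hCbd⟩ := lemA L hL ε hε
  set ρ := Real.exp (-δ) with hρdef
  have hρ1 : ρ < 1 := by
    rw [hρdef, show (1:ℝ) = Real.exp 0 by simp]
    exact Real.exp_lt_exp.2 (by linarith)
  have hρ0 : 0 < ρ := Real.exp_pos _
  have hsum_pow : Summable (fun r : ℕ => ((r : ℝ) + 1) ^ L * ρ ^ (r + 1)) := by
    have h := summable_pow_mul_geometric_of_norm_lt_one (R := ℝ) L
      (r := ρ) (by rwa [Real.norm_eq_abs, abs_of_pos hρ0])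
    have h2 := (summable_nat_add_iff (f := fun n : ℕ => (n : ℝ) ^ L * ρ ^ n) 1).2 h
    refine h2.congr fun n => ?_
    push_cast
    ring
  set M := ∑' r : ℕ, ((r : ℝ) + 1) ^ L * ρ ^ (r + 1) with hM
  have hM0 : 0 ≤ M := tsum_nonneg fun r => by positivity
  refine ⟨C * C₀ ^ L * M + 1, by positivity, ?_⟩
  intro N hN z hzre hzabs
  have hNR : (0:ℝ) < (N:ℝ) := by exact_mod_cast hN
  have hN0 : (N:ℂ) ≠ 0 := by exact_mod_cast hNR.ne'
  have hz0 : z ≠ 0 := by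
    intro h; rw [h] at hzre; simp at hzre; linarith
  have habsz : 0 < Complex.abs z := AbsoluteValue.pos _ hz0
  set q := Complex.exp z with hqdef
  have hqρ : Complex.abs q ≤ ρ := by
    rw [hqdef, Complex.abs_exp, hρdef]
    exact Real.exp_le_exp.2 (by linarith)
  have hq1 : Complex.abs q < 1 := lt_of_le_of_lt hqρ hρ1
  -- the w's
  set w : ℕ → ℂ := fun r => -((r : ℂ) + 1) * z / (N : ℂ) with hwdef
  have hwc : ∀ r : ℕ, w r = ((-((r : ℝ) + 1) / (N : ℝ) : ℝ) : ℂ) * z := by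
    intro r; rw [hwdef]; push_cast; ring
  have hw0 : ∀ r : ℕ, w r ≠ 0 := by
    intro r
    rw [hwc]
    apply mul_ne_zero _ hz0
    rw [Complex.ofReal_ne_zero]
    have : (0:ℝ) < ((r:ℝ)+1)/(N:ℝ) := by positivity
    intro h
    rw [neg_div] at h
    rw [neg_eq_zero] at h
    linarith
  have hwre : ∀ r : ℕ, (w r).re = (((r:ℝ)+1)/(N:ℝ)) * (-z.re) := by
    intro r
    rw [hwc, Complex.re_ofReal_mul]
    ring
  have hwabs : ∀ r : ℕ, Complex.abs (w r) = (((r:ℝ)+1)/(N:ℝ)) * Complex.abs z := by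
    intro r
    rw [hwc, map_mul, Complex.abs_ofReal, abs_div, abs_neg,
      abs_of_pos (by positivity : (0:ℝ) < (r:ℝ)+1), abs_of_pos hNR]
  have hwsec : ∀ r : ℕ, ε * Complex.abs (w r) ≤ (w r).re := by
    intro r
    rw [hwre, hwabs]
    have h1 : ε * Complex.abs z ≤ δ := by
      rw [hεdef]
      rw [div_mul_eq_mul_div, div_le_iff₀ hC]
      calc δ * Complex.abs z ≤ δ * C₀ := by
            apply mul_le_mul_of_nonneg_left hzabs (le_of_lt hδ)
        _ = δ * C₀ := rfl
    have h2 : δ ≤ -z.re := by linarith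
    have h3 : (0:ℝ) ≤ ((r:ℝ)+1)/(N:ℝ) := by positivity
    calc ε * ((((r:ℝ)+1)/(N:ℝ)) * Complex.abs z)
        = (((r:ℝ)+1)/(N:ℝ)) * (ε * Complex.abs z) := by ring
      _ ≤ (((r:ℝ)+1)/(N:ℝ)) * (-z.re) := by
          apply mul_le_mul_of_nonneg_left _ h3
          linarith
  have hwre0 : ∀ r : ℕ, 0 < (w r).re := by
    intro r
    calc (0:ℝ) < ε * Complex.abs (w r) := by
          have := AbsoluteValue.pos Complex.abs (hw0 r); positivity
      _ ≤ (w r).re := hwsec r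
  have hexpw : ∀ r : ℕ, Complex.exp (w r) - 1 ≠ 0 :=
    fun r => sub_ne_zero.2 (exp_ne_one_of_pos_re (hwre0 r))
  -- decomposition
  set g : ℕ → ℕ → ℂ := fun ℓ r => ((r : ℂ) + 1) ^ ℓ * q ^ (r + 1) / ((r : ℂ) + 1) ^ 2
    with hgdef
  set d : ℕ → ℂ := fun ℓ => QQ ℓ * (-1) ^ ℓ * (z / (N : ℂ)) ^ ℓ * ((N : ℂ) / z) with hddef
  set E : ℕ → ℂ := fun r => (q ^ (r + 1) / ((r : ℂ) + 1)) *
    (1 / (Complex.exp (w r) - 1) - PP L (w r) / (w r)) with hEdef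
  set termf : ℕ → ℂ := fun r => Complex.exp (((r : ℂ) + 1) * z) /
    (((r : ℂ) + 1) * (Complex.exp (-((r : ℂ) + 1) * z / (N : ℂ)) - 1)) with htermdef
  have hu0 : ∀ r : ℕ, ((r:ℂ)+1) ≠ 0 := by
    intro r
    intro h
    have := congrArg Complex.re h
    push_cast at this
    simp at this
    linarith [this, (Nat.cast_nonneg (α := ℝ) r)]
  have hexpq : ∀ r : ℕ, Complex.exp (((r : ℂ) + 1) * z) = q ^ (r + 1) := by
    intro r
    rw [hqdef, show ((r:ℂ)+1) = ((r+1 : ℕ) : ℂ) by push_cast; ring, Complex.exp_nat_mul]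
  have hwr : ∀ r : ℕ, w r = -(((r:ℂ)+1) * z / (N:ℂ)) := by
    intro r; rw [hwdef]; ring
  have hterm : ∀ r : ℕ, termf r = -(∑ ℓ ∈ range (L + 1), d ℓ * g ℓ r) + E r := by
    intro r
    have key : ∀ ℓ ∈ range (L + 1), d ℓ * g ℓ r
        = -((q ^ (r + 1) / ((r : ℂ) + 1)) * (QQ ℓ * (w r) ^ ℓ / (w r))) := by
      intro ℓ _
      rw [hwr, neg_pow, hddef, hgdef]
      simp only
      have hXp : (((r:ℂ)+1) * z / (N:ℂ)) ^ ℓ = ((r:ℂ)+1) ^ ℓ * (z / (N:ℂ)) ^ ℓ := by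
        rw [mul_div_assoc, mul_pow]
      rw [hXp]
      have hne : (((r:ℂ)+1) * z / (N:ℂ)) ≠ 0 := by
        apply div_ne_zero (mul_ne_zero (hu0 r) hz0) hN0
      field_simp
    have key2 : ∑ ℓ ∈ range (L + 1), d ℓ * g ℓ r
        = -((q ^ (r + 1) / ((r : ℂ) + 1)) * (PP L (w r) / (w r))) := by
      rw [sum_congr rfl key, Finset.sum_neg_distrib, PP, Finset.sum_div, Finset.mul_sum]
    rw [htermdef, hEdef]
    simp only
    rw [hexpq r, key2]
    have hwe : Complex.exp (-((r:ℂ)+1) * z / (N:ℂ)) = Complex.exp (w r) := by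
      rw [hwdef]
    rw [hwe]
    have gen : ∀ a u e X : ℂ, -(-(a / u * X)) + a / u * (1 / e - X) = a / (u * e) := by
      intros a u e X
      have h : a / u * (1 / e) = a / (u * e) := by rw [div_mul_div_comm, mul_one]
      linear_combination h
    exact (gen (q ^ (r + 1)) ((r:ℂ)+1) (Complex.exp (w r) - 1) (PP L (w r) / (w r))).symm
  have hu_abs : ∀ r : ℕ, Complex.abs ((r:ℂ)+1) = (r:ℝ)+1 := by
    intro r
    rw [show ((r:ℂ)+1) = (((r:ℝ)+1 : ℝ) : ℂ) by push_cast; ring, Complex.abs_ofReal,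
      abs_of_pos (by positivity)]
  have hg_bd : ∀ ℓ, ℓ ≤ L → ∀ r : ℕ, Complex.abs (g ℓ r) ≤ ((r:ℝ)+1) ^ L * ρ ^ (r+1) := by
    intro ℓ hℓ r
    rw [hgdef]
    simp only
    rw [map_div₀, map_mul, map_pow, map_pow, map_pow, hu_abs]
    have h1 : (1:ℝ) ≤ (r:ℝ)+1 := by
      have := Nat.cast_nonneg (α := ℝ) r; linarith
    have hnum : ((r:ℝ)+1)^ℓ * Complex.abs q ^ (r+1) ≤ ((r:ℝ)+1)^L * ρ^(r+1) := by
      apply mul_le_mul (pow_le_pow_right₀ h1 hℓ)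
        (pow_le_pow_left₀ (AbsoluteValue.nonneg _ _) hqρ _) (by positivity) (by positivity)
    have hden1 : (1:ℝ) ≤ (((r:ℝ)+1))^2 := by nlinarith
    calc ((r:ℝ)+1)^ℓ * Complex.abs q^(r+1) / (((r:ℝ)+1))^2
        ≤ ((r:ℝ)+1)^ℓ * Complex.abs q^(r+1) := div_le_self (by positivity) hden1
      _ ≤ ((r:ℝ)+1)^L * ρ^(r+1) := hnum
  have hsum_g : ∀ ℓ ∈ range (L+1), Summable (fun r => g ℓ r) := by
    intro ℓ hℓ
    apply Summable.of_norm_bounded hsum_pow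
    intro r
    rw [Complex.norm_eq_abs]
    exact hg_bd ℓ (by simpa [Nat.lt_succ_iff] using mem_range.mp hℓ) r
  have hE_bd : ∀ r : ℕ, Complex.abs (E r)
      ≤ C * C₀^L / (N:ℝ)^L * (((r:ℝ)+1)^L * ρ^(r+1)) := by
    intro r
    rw [hEdef]
    simp only
    rw [map_mul, map_div₀, map_pow, hu_abs]
    have hR := hCbd (w r) (hw0 r) (hwsec r)
    have h1 : (1:ℝ) ≤ (r:ℝ)+1 := by
      have := Nat.cast_nonneg (α := ℝ) r; linarith
    have habsw : Complex.abs (w r) ≤ ((r:ℝ)+1) * C₀ / N := by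
      rw [hwabs]
      calc (((r:ℝ)+1)/(N:ℝ)) * Complex.abs z ≤ (((r:ℝ)+1)/(N:ℝ)) * C₀ := by
            apply mul_le_mul_of_nonneg_left hzabs (by positivity)
        _ = ((r:ℝ)+1) * C₀ / N := by ring
    calc Complex.abs q ^ (r+1) / ((r:ℝ)+1) *
          Complex.abs (1 / (Complex.exp (w r) - 1) - PP L (w r) / (w r))
        ≤ ρ^(r+1) / 1 * (C * (((r:ℝ)+1) * C₀ / N)^L) := by
          apply mul_le_mul
          · apply div_le_div₀ (by positivity)
              (pow_le_pow_left₀ (AbsoluteValue.nonneg _ _) hqρ _) one_pos h1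
          · exact le_trans hR (mul_le_mul_of_nonneg_left
              (pow_le_pow_left₀ (AbsoluteValue.nonneg _ _) habsw L) hC0.le)
          · exact AbsoluteValue.nonneg _ _
          · positivity
      _ = C * C₀^L / (N:ℝ)^L * (((r:ℝ)+1)^L * ρ^(r+1)) := by
          rw [div_pow, mul_pow]
          field_simp
  have hsum_E : Summable E := by
    apply Summable.of_norm_bounded (hsum_pow.mul_left (C * C₀^L / (N:ℝ)^L))
    intro r
    rw [Complex.norm_eq_abs]
    exact hE_bd r
  have hsum_main : Summable (fun r => -(∑ ℓ ∈ range (L+1), d ℓ * g ℓ r)) := by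
    apply Summable.neg
    apply summable_sum
    intro ℓ hℓ
    exact (hsum_g ℓ hℓ).mul_left (d ℓ)
  have hsum_term : Summable termf := by
    apply (hsum_main.add hsum_E).congr
    intro r
    exact (hterm r).symm
  refine ⟨hsum_term, ?_⟩
  have htsum : ∑' r, termf r = -(∑ ℓ ∈ range (L+1), d ℓ * (∑' r, g ℓ r)) + ∑' r, E r := by
    rw [tsum_congr hterm, Summable.tsum_add hsum_main hsum_E]
    congr 1
    rw [tsum_neg]
    congr 1
    rw [Summable.tsum_finsetSum (fun ℓ hℓ => (hsum_g ℓ hℓ).mul_left (d ℓ))]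
    exact sum_congr rfl fun ℓ _ => tsum_mul_left
  have hg_tsum : ∀ ℓ ∈ range (L+1), (∑' r, g ℓ r) = Li (2 - (ℓ:ℤ)) q := by
    intro ℓ hℓ
    rw [Li]
    refine tsum_congr fun n => ?_
    rw [hgdef]
    simp only
    rw [zpow_sub₀ (hu0 n), zpow_natCast,
      show ((2:ℤ)) = ((2:ℕ):ℤ) by norm_num, zpow_natCast]
    rw [div_div_eq_mul_div]
    ring
  have hS : ∑ ℓ ∈ range (L+1), d ℓ * (∑' r, g ℓ r)
      = ((N:ℂ)/z) * Li 2 q - (1/2) * Complex.log (1 - q)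
        + ∑ ℓ ∈ Icc 2 L, QQ ℓ * (z/(N:ℂ))^(ℓ-1) * Li (2-(ℓ:ℤ)) q := by
    have e1 : ∀ ℓ ∈ range (L+1), d ℓ * (∑' r, g ℓ r)
        = QQ ℓ * (-1)^ℓ * (z/(N:ℂ))^ℓ * ((N:ℂ)/z) * Li (2-(ℓ:ℤ)) q := by
      intro ℓ hℓ
      rw [hg_tsum ℓ hℓ, hddef]
    rw [sum_congr rfl e1, sum_split L hL z (N:ℂ) q hz0 hN0 hq1]
  have hfinal : -(∑' r, termf r) -
      (((N : ℂ) / z) * Li 2 q - (1 / 2) * Complex.log (1 - q) +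
        ∑ ℓ ∈ Finset.Icc 2 L, QQ ℓ * (z / (N : ℂ)) ^ (ℓ - 1) * Li (2 - (ℓ : ℤ)) q)
      = -(∑' r, E r) := by
    rw [htsum, hS]
    ring
  have hgoal : (-(∑' r : ℕ,
        Complex.exp (((r : ℂ) + 1) * z) /
          (((r : ℂ) + 1) * (Complex.exp (-((r : ℂ) + 1) * z / (N : ℂ)) - 1))) -
      (((N : ℂ) / z) * Li 2 (Complex.exp z) -
        (1 / 2) * Complex.log (1 - Complex.exp z) +
        ∑ ℓ ∈ Finset.Icc 2 L,
          ((bernoulli ℓ : ℚ) : ℂ) / (Nat.factorial ℓ : ℂ) *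
            (z / (N : ℂ)) ^ (ℓ - 1) * Li (2 - (ℓ : ℤ)) (Complex.exp z)))
      = -(∑' r, E r) := hfinal
  rw [hgoal, norm_neg]
  have hsumEnorm : Summable (fun r => ‖E r‖) := by
    apply Summable.of_nonneg_of_le (fun r => norm_nonneg _)
      (fun r => by rw [Complex.norm_eq_abs]; exact hE_bd r)
      (hsum_pow.mul_left (C * C₀^L / (N:ℝ)^L))
  calc Complex.abs (∑' r, E r) ≤ ∑' r, ‖E r‖ := by
        rw [← Complex.norm_eq_abs]
        exact norm_tsum_le_tsum_norm hsumEnorm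
    _ ≤ ∑' r : ℕ, (C * C₀^L / (N:ℝ)^L) * (((r:ℝ)+1)^L * ρ^(r+1)) := by
        apply Summable.tsum_le_tsum (fun r => ?_) hsumEnorm (hsum_pow.mul_left (C * C₀^L / (N:ℝ)^L))
        rw [Complex.norm_eq_abs]
        exact hE_bd r
    _ = (C * C₀^L / (N:ℝ)^L) * M := by rw [tsum_mul_left]
    _ = C * C₀^L * M / (N:ℝ)^L := by ring
    _ ≤ (C * C₀^L * M + 1) / (N:ℝ)^L := by
        rw [div_le_div_iff_of_pos_right (by positivity : (0:ℝ) < (N:ℝ)^L)]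
        linarith
end

section
/- For all N ∈ ℤ_{≥1}, m ∈ ℤ and every primitive k-th root of unity ξ ∈ ℂ, the Laurent coefficient A_m(ξ,N) lies in the subfield ℚ(ξ) of ℂ, i.e. in the ℚ-subalgebra of ℂ generated by ξ. -/
open scoped Real BigOperators

open Polynomial

section Aux

lemma adjoin_inv_mem {ξ x : ℂ} (halg : IsAlgebraic ℚ ξ)
    (hx : x ∈ Algebra.adjoin ℚ ({ξ} : Set ℂ)) : x⁻¹ ∈ Algebra.adjoin ℚ ({ξ} : Set ℂ) := by
  have h := IntermediateField.adjoin_toSubalgebra_of_isAlgebraic (F := ℚ) (E := ℂ) (S := {ξ})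
    (by rintro y rfl; exact halg)
  rw [← h] at hx ⊢
  exact (IntermediateField.adjoin ℚ {ξ}).inv_mem hx

lemma iterDeriv_inv_poly (S : Subalgebra ℚ ℂ) (G : Polynomial S) (n : ℕ) :
    ∃ P : Polynomial S, ∀ q : ℂ, (G.map (algebraMap S ℂ)).eval q ≠ 0 →
      iteratedDeriv n (fun x => ((G.map (algebraMap S ℂ)).eval x)⁻¹) q
        = (P.map (algebraMap S ℂ)).eval q / ((G.map (algebraMap S ℂ)).eval q) ^ (n + 1) := by
  set Gc := G.map (algebraMap S ℂ) with hGc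
  induction n with
  | zero =>
    refine ⟨1, fun q hq => ?_⟩
    simp only [iteratedDeriv_zero, Polynomial.map_one, eval_one, zero_add, pow_one, one_div]
  | succ n ih =>
    obtain ⟨P, hP⟩ := ih
    refine ⟨derivative P * G - C ((n : S) + 1) * (P * derivative G), fun q hq => ?_⟩
    set Pc := P.map (algebraMap S ℂ) with hPc
    have hU : IsOpen {x : ℂ | Gc.eval x ≠ 0} :=
      isOpen_ne.preimage (Polynomial.continuous Gc)
    have hmem : {x : ℂ | Gc.eval x ≠ 0} ∈ nhds q := hU.mem_nhds hq
    have heq : iteratedDeriv n (fun x => (Gc.eval x)⁻¹) =ᶠ[nhds q]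
        fun x => Pc.eval x / Gc.eval x ^ (n + 1) :=
      Filter.eventuallyEq_of_mem hmem fun x hx => hP x hx
    have hfun : (fun x : ℂ => Pc.eval x / Gc.eval x ^ (n + 1))
        = fun x : ℂ => Pc.eval x / (Gc ^ (n + 1)).eval x :=
      funext fun x => by rw [eval_pow]
    rw [iteratedDeriv_succ, heq.deriv_eq, hfun]
    have hdd : deriv (fun x => Pc.eval x / (Gc ^ (n + 1)).eval x) q =
        (Pc.derivative.eval q * (Gc ^ (n + 1)).eval q -
          Pc.eval q * ((Gc ^ (n + 1)).derivative.eval q)) / ((Gc ^ (n + 1)).eval q) ^ 2 := by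
      rw [deriv_fun_div (Polynomial.differentiableAt _) (Polynomial.differentiableAt _)
        (by rw [eval_pow]; exact pow_ne_zero _ hq)]
      rw [Polynomial.deriv, Polynomial.deriv]
    rw [hdd, Polynomial.derivative_pow]
    have hcast : algebraMap S ℂ ((n : S) + 1) = (n : ℂ) + 1 := by
      rw [RingHom.map_add]; rw [map_natCast (algebraMap S ℂ), map_one (algebraMap S ℂ)]
    have hmap : ((derivative P * G - C ((n : S) + 1) * (P * derivative G)).map
        (algebraMap S ℂ)).eval q =
        Pc.derivative.eval q * Gc.eval q - ((n : ℂ) + 1) * (Pc.eval q * Gc.derivative.eval q) := by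
      simp only [Polynomial.map_sub, Polynomial.map_mul, Polynomial.map_C,
        Polynomial.derivative_map, eval_sub, eval_mul, eval_C, hcast, ← hGc, ← hPc]
      rw [hPc, hGc, Polynomial.derivative_map, Polynomial.derivative_map]
    rw [hmap]
    have h1 : Gc.eval q ≠ 0 := hq
    simp only [Nat.add_sub_cancel, eval_mul, eval_C, eval_pow, Nat.cast_add, Nat.cast_one]
    field_simp
    ring

open Classical in
noncomputable def Gpoly (K : Subalgebra ℚ ℂ) (ξ₀ : K) (N : ℕ) : Polynomial K :=
  ∏ j ∈ Finset.Icc 1 N,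
    if (ξ₀ : ℂ) ^ j = 1 then -(∑ i ∈ Finset.range j, C (ξ₀ ^ (j - 1 - i)) * X ^ i)
    else (1 - X ^ j)

open Classical in
lemma Gpoly_eval (K : Subalgebra ℚ ℂ) (ξ₀ : K) (N : ℕ) (q : ℂ) :
    ((Gpoly K ξ₀ N).map (algebraMap K ℂ)).eval q =
      ∏ j ∈ Finset.Icc 1 N,
        if (ξ₀ : ℂ) ^ j = 1 then -(∑ i ∈ Finset.range j, ((ξ₀ : ℂ)) ^ (j - 1 - i) * q ^ i)
        else (1 - q ^ j) := by
  rw [eval_map, Gpoly, Polynomial.eval₂_finset_prod]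
  refine Finset.prod_congr rfl fun j _ => ?_
  by_cases h : (ξ₀ : ℂ) ^ j = 1 <;>
    simp [h, eval₂_finset_sum, SubmonoidClass.coe_pow, eval₂_pow, eval₂_C,
      Subalgebra.algebraMap_eq, Algebra.algebraMap_self, RingHom.id_apply, Subalgebra.coe_val]

noncomputable def qpoch' (q : ℂ) (N : ℕ) : ℂ := ∏ j ∈ Finset.Icc 1 N, (1 - q ^ j)

open Classical in
lemma qpoch'_factor (K : Subalgebra ℚ ℂ) (ξ₀ : K) (N : ℕ) (q : ℂ) :
    qpoch' q N = (q - (ξ₀ : ℂ)) ^ (((Finset.Icc 1 N).filter fun j => (ξ₀ : ℂ) ^ j = 1).card) *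
      ((Gpoly K ξ₀ N).map (algebraMap K ℂ)).eval q := by
  rw [Gpoly_eval]
  have hpow : ∏ j ∈ Finset.Icc 1 N, (if (ξ₀ : ℂ) ^ j = 1 then (q - (ξ₀ : ℂ)) else 1)
      = (q - (ξ₀ : ℂ)) ^ (((Finset.Icc 1 N).filter fun j => (ξ₀ : ℂ) ^ j = 1).card) := by
    rw [Finset.prod_ite]
    simp [Finset.prod_const]
  calc qpoch' q N
      = ∏ j ∈ Finset.Icc 1 N,
        ((if (ξ₀ : ℂ) ^ j = 1 then (q - (ξ₀ : ℂ)) else 1) *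
          (if (ξ₀ : ℂ) ^ j = 1 then -(∑ i ∈ Finset.range j, ((ξ₀ : ℂ)) ^ (j - 1 - i) * q ^ i)
            else (1 - q ^ j))) := by
        refine Finset.prod_congr rfl fun j _ => ?_
        by_cases h : (ξ₀ : ℂ) ^ j = 1
        · simp only [h, if_true]
          have hg := geom_sum₂_mul (R := ℂ) q (ξ₀ : ℂ) j
          have hcomm : ∑ i ∈ Finset.range j, ((ξ₀ : ℂ)) ^ (j - 1 - i) * q ^ i
              = ∑ i ∈ Finset.range j, q ^ i * ((ξ₀ : ℂ)) ^ (j - 1 - i) :=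
            Finset.sum_congr rfl fun i _ => mul_comm _ _
          rw [hcomm]
          calc 1 - q ^ j
              = -((∑ i ∈ Finset.range j, q ^ i * ((ξ₀ : ℂ)) ^ (j - 1 - i)) * (q - (ξ₀ : ℂ))) := by
                rw [hg, h]; ring
            _ = (q - (ξ₀ : ℂ)) * -(∑ i ∈ Finset.range j, q ^ i * ((ξ₀ : ℂ)) ^ (j - 1 - i)) := by
                ring
        · simp [h]
    _ = _ := by rw [Finset.prod_mul_distrib, hpow]

lemma eval_map_coe (K : Subalgebra ℚ ℂ) (ξ₀ : K) (p : Polynomial K) :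
    (p.map (algebraMap K ℂ)).eval (ξ₀ : ℂ) = ((p.eval ξ₀ : K) : ℂ) := by
  rw [eval_map, show ((ξ₀ : K) : ℂ) = algebraMap K ℂ ξ₀ from rfl, Polynomial.eval₂_at_apply]; rfl

open Classical in
lemma Gpoly_factor_ne_zero (K : Subalgebra ℚ ℂ) (ξ₀ : K) (N : ℕ) (hne : (ξ₀ : ℂ) ≠ 0) :
    ∀ j ∈ Finset.Icc 1 N,
      (if (ξ₀ : ℂ) ^ j = 1 then
        -(∑ i ∈ Finset.range j, ((ξ₀ : ℂ)) ^ (j - 1 - i) * (ξ₀ : ℂ) ^ i)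
      else (1 - (ξ₀ : ℂ) ^ j)) ≠ 0 := by
  intro j hj
  have hj1 : 1 ≤ j := (Finset.mem_Icc.1 hj).1
  by_cases h : (ξ₀ : ℂ) ^ j = 1
  · simp only [h, if_true]
    have hsum : ∑ i ∈ Finset.range j, ((ξ₀ : ℂ)) ^ (j - 1 - i) * (ξ₀ : ℂ) ^ i
        = (j : ℂ) * (ξ₀ : ℂ) ^ (j - 1) := by
      rw [Finset.sum_congr rfl fun i hi => ?_, Finset.sum_const, Finset.card_range,
        nsmul_eq_mul]
      rw [← pow_add]
      congr 1
      have hi' : i ≤ j - 1 := Nat.le_sub_one_of_lt (Finset.mem_range.1 hi)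
      omega
    rw [hsum]
    refine neg_ne_zero.2 (mul_ne_zero ?_ (pow_ne_zero _ hne))
    exact_mod_cast Nat.cast_ne_zero.2 (by omega : j ≠ 0)
  · simpa only [h, if_false, sub_ne_zero] using fun hc => h hc.symm

end Aux

/-- The finite product `(q)_N = ∏_{j=1}^N (1 - q^j)`. -/
noncomputable def qpoch (q : ℂ) (N : ℕ) : ℂ := ∏ j ∈ Finset.Icc 1 N, (1 - q ^ j)

theorem stmt19 (k N : ℕ) (hk : 1 ≤ k) (hN : 1 ≤ N) (m : ℤ) (ξ : ℂ)
    (hξ : IsPrimitiveRoot ξ k) (A : ℂ)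
    (hA : ∃ ε₀ > (0 : ℝ), ∀ ε : ℝ, 0 < ε → ε < ε₀ →
      A = (2 * (π : ℂ) * Complex.I)⁻¹ *
        ∮ q in C(ξ, ε), (q - ξ) ^ (-(m + 1)) * (qpoch q N)⁻¹) :
    A ∈ Algebra.adjoin ℚ ({ξ} : Set ℂ) := by
  classical
  obtain ⟨ε₀, hε₀, hA⟩ := hA
  have hk0 : k ≠ 0 := by omega
  have hξk : ξ ^ k = 1 := hξ.pow_eq_one
  have hξ0 : ξ ≠ 0 := by
    intro h; rw [h, zero_pow hk0] at hξk; exact zero_ne_one hξk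
  set K := Algebra.adjoin ℚ ({ξ} : Set ℂ) with hK
  have hξmem : ξ ∈ K := Algebra.self_mem_adjoin_singleton ℚ ξ
  set ξ₀ : K := ⟨ξ, hξmem⟩ with hξ₀def
  have hξ₀coe : (ξ₀ : ℂ) = ξ := rfl
  have halg : IsAlgebraic ℚ ξ := by
    refine ⟨X ^ k - C 1, ?_, ?_⟩
    · intro hc
      have := Polynomial.monic_X_pow_sub_C (1 : ℚ) hk0
      exact this.ne_zero hc
    · simp [Polynomial.aeval_def, hξk]
  set G := Gpoly K ξ₀ N with hG
  set Gc := G.map (algebraMap K ℂ) with hGc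
  set g : ℂ → ℂ := fun q => Gc.eval q with hg
  set r : ℕ := ((Finset.Icc 1 N).filter fun j => (ξ₀ : ℂ) ^ j = 1).card with hr
  have hfac : ∀ q : ℂ, qpoch q N = (q - ξ) ^ r * g q := fun q =>
    qpoch'_factor K ξ₀ N q
  have hξ0' : (ξ₀ : ℂ) ≠ 0 := hξ0
  have hgξ : g ξ ≠ 0 := by
    show ((Gpoly K ξ₀ N).map (algebraMap K ℂ)).eval ((ξ₀ : K) : ℂ) ≠ 0
    rw [Gpoly_eval]
    exact Finset.prod_ne_zero_iff.2 (Gpoly_factor_ne_zero K ξ₀ N hξ0')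
  have hU : IsOpen {x : ℂ | g x ≠ 0} := isOpen_ne.preimage (Polynomial.continuous Gc)
  obtain ⟨δ, hδ0, hδ⟩ := Metric.isOpen_iff.1 hU ξ hgξ
  set ε : ℝ := min (ε₀ / 2) (δ / 2) with hε
  have hε0 : 0 < ε := lt_min (by linarith) (by linarith)
  have hεε₀ : ε < ε₀ := lt_of_le_of_lt (min_le_left _ _) (by linarith)
  have hball : Metric.closedBall ξ ε ⊆ {x : ℂ | g x ≠ 0} := by
    refine subset_trans ?_ hδ
    refine subset_trans (Metric.closedBall_subset_closedBall (min_le_right _ _)) ?_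
    exact Metric.closedBall_subset_ball (by linarith)
  have hAe := hA ε hε0 hεε₀
  set h : ℂ → ℂ := fun q => (g q)⁻¹ with hh
  set e : ℤ := -(m + 1) - r with he
  have hsphere : Set.EqOn (fun q : ℂ => (q - ξ) ^ (-(m + 1)) * (qpoch q N)⁻¹)
      (fun q : ℂ => (q - ξ) ^ e * h q) (Metric.sphere ξ ε) := by
    intro q hq
    have hqξ : q ≠ ξ := by
      intro hc
      rw [Metric.mem_sphere, hc, dist_self] at hq
      exact hε0.ne' hq.symm
    have hsub : q - ξ ≠ 0 := sub_ne_zero.2 hqξ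
    show (q - ξ) ^ (-(m + 1)) * (qpoch q N)⁻¹ = (q - ξ) ^ e * h q
    rw [hfac q, mul_inv, ← zpow_natCast (q - ξ) r, ← zpow_neg, ← mul_assoc,
      ← zpow_add₀ hsub, he]
    ring_nf
    rfl
  have hint : A = (2 * (π : ℂ) * Complex.I)⁻¹ * ∮ q in C(ξ, ε), (q - ξ) ^ e * h q := by
    rw [hAe]
    congr 1
    exact circleIntegral.integral_congr hε0.le hsphere
  have hdiff : DifferentiableOn ℂ h (Metric.closedBall ξ ε) :=
    DifferentiableOn.inv ((Polynomial.differentiable Gc).differentiableOn) fun x hx => hball hx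
  rcases le_or_gt 0 e with hcase | hcase
  · -- e ≥ 0 : integrand extends holomorphically, integral is zero
    have hfeq : (fun q : ℂ => (q - ξ) ^ e * h q) = fun q : ℂ => (q - ξ) ^ e.toNat * h q := by
      funext q
      rw [← Int.toNat_of_nonneg hcase, zpow_natCast, Int.toNat_of_nonneg hcase]
    have hd2 : DifferentiableOn ℂ (fun q : ℂ => (q - ξ) ^ e.toNat * h q)
        (Metric.closedBall ξ ε) :=
      (((differentiable_id.sub_const ξ).pow e.toNat).differentiableOn).mul hdiff
    have hzero : (∮ q in C(ξ, ε), (q - ξ) ^ e * h q) = 0 := by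
      rw [hfeq]
      refine Complex.circleIntegral_eq_zero_of_differentiable_on_off_countable hε0.le
        Set.countable_empty hd2.continuousOn fun z hz => ?_
      have hz' : z ∈ Metric.closedBall ξ ε := Metric.ball_subset_closedBall hz.1
      exact (((differentiableAt_id.sub_const ξ).pow e.toNat)).mul
        ((Polynomial.differentiableAt Gc).inv (hball hz'))
    rw [hint, hzero, mul_zero]
    exact zero_mem K
  · -- e < 0 : Cauchy coefficient formula
    set n : ℕ := (-e - 1).toNat with hn
    have hen : e = -((n : ℤ) + 1) := by
      have : ((-e - 1).toNat : ℤ) = -e - 1 := Int.toNat_of_nonneg (by omega)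
      omega
    set εn : NNReal := ⟨ε, hε0.le⟩ with hεn
    have hεco : (εn : ℝ) = ε := rfl
    have hps : HasFPowerSeriesOnBall h (cauchyPowerSeries h ξ εn) ξ εn := by
      refine DifferentiableOn.hasFPowerSeriesOnBall ?_ ?_
      · rw [show ((εn : ℝ)) = ε from rfl]; exact hdiff
      · exact_mod_cast hε0
    have hcoeff : A = cauchyPowerSeries h ξ εn n (fun _ => 1) := by
      rw [cauchyPowerSeries_apply, hint, smul_eq_mul]
      have hsm : ∀ z : ℂ, ((1 : ℂ) / (z - ξ)) ^ n • ((z - ξ)⁻¹ • h z)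
          = (z - ξ) ^ e * h z := by
        intro z
        rw [hen, smul_eq_mul, smul_eq_mul]
        rw [show (-((n : ℤ) + 1)) = -(((n + 1 : ℕ) : ℤ)) by push_cast; ring]
        rw [zpow_neg, zpow_natCast, ← inv_pow, pow_succ, one_div]
        ring
      congr 1
      exact circleIntegral.integral_congr hε0.le fun z _ => (hsm z).symm
    have hfact := hps.factorial_smul (1 : ℂ) n
    have hfd : iteratedFDeriv ℂ n h ξ (fun _ => (1 : ℂ)) = iteratedDeriv n h ξ :=
      (iteratedDeriv_eq_iteratedFDeriv).symm
    have hcoeff2 : cauchyPowerSeries h ξ εn n (fun _ => (1 : ℂ))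
        = (n.factorial : ℂ)⁻¹ * iteratedDeriv n h ξ := by
      have hne : (n.factorial : ℂ) ≠ 0 := Nat.cast_ne_zero.2 (Nat.factorial_ne_zero n)
      rw [← hfd, ← hfact, nsmul_eq_mul, ← mul_assoc, inv_mul_cancel₀ hne, one_mul]
    obtain ⟨P, hP⟩ := iterDeriv_inv_poly K G n
    have hval : iteratedDeriv n h ξ = ((P.eval ξ₀ : K) : ℂ) / (g ξ) ^ (n + 1) := by
      have h1 := hP ξ hgξ
      show iteratedDeriv n (fun x => ((G.map (algebraMap K ℂ)).eval x)⁻¹) ξ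
        = ((P.eval ξ₀ : K) : ℂ) / (((G.map (algebraMap K ℂ)).eval ξ)) ^ (n + 1)
      rw [h1]
      congr 1
      exact eval_map_coe K ξ₀ P
    have hgmem : g ξ ∈ K := by
      have h2 : g ξ = ((G.eval ξ₀ : K) : ℂ) := eval_map_coe K ξ₀ G
      rw [h2]; exact (G.eval ξ₀).2
    have hmemP : ((P.eval ξ₀ : K) : ℂ) ∈ K := (P.eval ξ₀).2
    have hpowmem : ((g ξ) ^ (n + 1))⁻¹ ∈ K := adjoin_inv_mem halg (pow_mem hgmem _)
    have hfactmem : ((n.factorial : ℂ))⁻¹ ∈ K := by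
      have h3 := Subalgebra.algebraMap_mem K ((n.factorial : ℚ))⁻¹
      have h4 : (algebraMap ℚ ℂ) ((n.factorial : ℚ))⁻¹ = ((n.factorial : ℂ))⁻¹ := by
        rw [map_inv₀, map_natCast]
      rwa [h4] at h3
    rw [hcoeff, hcoeff2, hval, div_eq_mul_inv]
    exact mul_mem hfactmem (mul_mem hmemP hpowmem)
end
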